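/- arXiv:1811.04988 — 3 statements merged into one kernel-verified Lean document; each statement's English description precedes it below -/
import Mathlib

section
/- Let (X_j)_{j\ge 1} and (Y_j)_{j\ge 1} be sequences such that (X_j, Y_j) are i.i.d. square-integrable random pairs. For integers N \le m \le n, define \Delta^X = (1/N)\sum_{j=1}^N X_j - (1/m)\sum_{j=1}^m X_j and \Delta^Y = (1/N)\sum_{j=1}^N Y_j - (1/n)\sum_{j=1}^n Y_j, and set r_i = m/N, r_j = n/N. Then Cov[\Delta^X, \Delta^Y] = ((\min(r_i,r_j) - 1)/\min(r_i,r_j)) Cov[X_1,Y_1]/N, that is, Cov[\Delta^X, \Delta^Y] = ((m - N)/(m N)) Cov[X_1,Y_1]. -/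
open MeasureTheory ProbabilityTheory Finset

/-- Covariance of two real-valued random variables. -/
noncomputable def cov {Ω : Type*} [MeasurableSpace Ω] (μ : Measure Ω) (X Y : Ω → ℝ) : ℝ :=
  ∫ ω, (X ω - ∫ x, X x ∂μ) * (Y ω - ∫ x, Y x ∂μ) ∂μ

private lemma integrable_mul_of_memL2 {Ω : Type*} [MeasurableSpace Ω] {μ : Measure Ω}
    [IsProbabilityMeasure μ] {f g : Ω → ℝ} (hf : MemLp f 2 μ) (hg : MemLp g 2 μ) :
    Integrable (fun ω => f ω * g ω) μ := by
  have h : (fun ω => f ω * g ω)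
      = fun ω => ((f ω + g ω) ^ 2 - f ω ^ 2 - g ω ^ 2) / 2 := by
    funext ω; ring
  rw [h]
  exact (((hf.add hg).integrable_sq.sub hf.integrable_sq).sub hg.integrable_sq).div_const 2

private lemma sum_ite_lt_mul {M n : ℕ} (h : M ≤ n) (c : ℝ) (f : ℕ → ℝ) :
    ∑ i ∈ range n, (if i < M then c else 0) * f i = c * ∑ i ∈ range M, f i := by
  rw [Finset.mul_sum, ← Finset.sum_subset (Finset.range_subset_range.2 h)]
  · exact Finset.sum_congr rfl fun i hi => by rw [if_pos (Finset.mem_range.1 hi)]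
  · intro i _ hi
    rw [if_neg fun hc => hi (Finset.mem_range.2 hc), zero_mul]

private lemma cov_sum_sum {Ω : Type*} [MeasurableSpace Ω] (μ : Measure Ω)
    [IsProbabilityMeasure μ] (s : Finset ℕ) (a b : ℕ → ℝ) (f g : ℕ → Ω → ℝ)
    (hf : ∀ i, MemLp (f i) 2 μ) (hg : ∀ i, MemLp (g i) 2 μ) :
    cov μ (fun ω => ∑ i ∈ s, a i * f i ω) (fun ω => ∑ i ∈ s, b i * g i ω)
      = ∑ i ∈ s, ∑ j ∈ s, a i * b j * cov μ (f i) (g j) := by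
  have hfi : ∀ i, Integrable (f i) μ := fun i => (hf i).integrable one_le_two
  have hgi : ∀ i, Integrable (g i) μ := fun i => (hg i).integrable one_le_two
  have hFL2 : ∀ i, MemLp (fun ω => f i ω - ∫ x, f i x ∂μ) 2 μ :=
    fun i => (hf i).sub (memLp_const _)
  have hGL2 : ∀ i, MemLp (fun ω => g i ω - ∫ x, g i x ∂μ) 2 μ :=
    fun i => (hg i).sub (memLp_const _)
  have hmulint : ∀ i j,
      Integrable (fun ω => (f i ω - ∫ x, f i x ∂μ) * (g j ω - ∫ x, g j x ∂μ)) μ :=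
    fun i j => integrable_mul_of_memL2 (hFL2 i) (hGL2 j)
  have hIX : ∫ ω, ∑ i ∈ s, a i * f i ω ∂μ = ∑ i ∈ s, a i * ∫ x, f i x ∂μ := by
    rw [integral_finset_sum _ fun i _ => (hfi i).const_mul (a i)]
    exact Finset.sum_congr rfl fun i _ => integral_const_mul _ _
  have hIY : ∫ ω, ∑ i ∈ s, b i * g i ω ∂μ = ∑ i ∈ s, b i * ∫ x, g i x ∂μ := by
    rw [integral_finset_sum _ fun i _ => (hgi i).const_mul (b i)]
    exact Finset.sum_congr rfl fun i _ => integral_const_mul _ _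
  have hintegrand : ∀ ω,
      ((∑ i ∈ s, a i * f i ω) - ∫ x, ∑ i ∈ s, a i * f i x ∂μ)
        * ((∑ i ∈ s, b i * g i ω) - ∫ x, ∑ i ∈ s, b i * g i x ∂μ)
      = ∑ i ∈ s, ∑ j ∈ s, a i * b j *
          ((f i ω - ∫ x, f i x ∂μ) * (g j ω - ∫ x, g j x ∂μ)) := by
    intro ω
    rw [hIX, hIY, ← Finset.sum_sub_distrib, ← Finset.sum_sub_distrib, Finset.sum_mul_sum]
    exact Finset.sum_congr rfl fun i _ => Finset.sum_congr rfl fun j _ => by ring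
  show (∫ ω, ((∑ i ∈ s, a i * f i ω) - ∫ x, ∑ i ∈ s, a i * f i x ∂μ)
        * ((∑ i ∈ s, b i * g i ω) - ∫ x, ∑ i ∈ s, b i * g i x ∂μ) ∂μ) = _
  rw [integral_congr_ae (Filter.Eventually.of_forall hintegrand),
    integral_finset_sum _ fun i _ =>
      integrable_finset_sum _ fun j _ => (hmulint i j).const_mul _]
  refine Finset.sum_congr rfl fun i _ => ?_
  rw [integral_finset_sum _ fun j _ => (hmulint i j).const_mul _]
  exact Finset.sum_congr rfl fun j _ => integral_const_mul _ _

/-- ACV-MF off-diagonal covariance with nested samples: for i.i.d. pairs `(Xⱼ, Yⱼ)` and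
`N ≤ m ≤ n`, with `ΔX` the discrepancy of the `X`-means over the first `N` and first `m`
samples and `ΔY` over the first `N` and first `n` samples,
`Cov[ΔX, ΔY] = ((min(m,n) - N)/(min(m,n) N)) Cov[X₁,Y₁]`, i.e. with `min(m,n) = m`,
`Cov[ΔX, ΔY] = ((m - N)/(m N)) Cov[X₁,Y₁]`. -/
theorem stmt8 {Ω : Type*} [MeasurableSpace Ω] (μ : Measure Ω) [IsProbabilityMeasure μ]
    (Z : ℕ → Ω → ℝ × ℝ) (hmeas : ∀ j, Measurable (Z j))
    (hindep : iIndepFun Z μ)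
    (hident : ∀ j, IdentDistrib (Z j) (Z 0) μ μ)
    (hL2X : MemLp (fun ω => (Z 0 ω).1) 2 μ) (hL2Y : MemLp (fun ω => (Z 0 ω).2) 2 μ)
    (N m n : ℕ) (hN : 1 ≤ N) (hNm : N ≤ m) (hmn : m ≤ n) :
    cov μ
      (fun ω => (1 / N : ℝ) * ∑ j ∈ Finset.range N, (Z j ω).1
        - (1 / m : ℝ) * ∑ j ∈ Finset.range m, (Z j ω).1)
      (fun ω => (1 / N : ℝ) * ∑ j ∈ Finset.range N, (Z j ω).2
        - (1 / n : ℝ) * ∑ j ∈ Finset.range n, (Z j ω).2)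
      = (((min m n : ℝ) - N) / ((min m n : ℝ) * N))
          * cov μ (fun ω => (Z 0 ω).1) (fun ω => (Z 0 ω).2) := by
  have hNn : N ≤ n := le_trans hNm hmn
  have hNpos : (0:ℝ) < N := by exact_mod_cast hN
  have hmpos : (0:ℝ) < m := lt_of_lt_of_le hNpos (by exact_mod_cast hNm)
  have hnpos : (0:ℝ) < n := lt_of_lt_of_le hmpos (by exact_mod_cast hmn)
  set f : ℕ → Ω → ℝ := fun i ω => (Z i ω).1 with hfdef
  set g : ℕ → Ω → ℝ := fun i ω => (Z i ω).2 with hgdef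
  have hidf : ∀ i, IdentDistrib (f i) (f 0) μ μ := fun i => (hident i).comp measurable_fst
  have hidg : ∀ i, IdentDistrib (g i) (g 0) μ μ := fun i => (hident i).comp measurable_snd
  have hfL2 : ∀ i, MemLp (f i) 2 μ := fun i => (hidf i).symm.memLp_snd hL2X
  have hgL2 : ∀ i, MemLp (g i) 2 μ := fun i => (hidg i).symm.memLp_snd hL2Y
  have hmf : ∀ i, ∫ x, f i x ∂μ = ∫ x, f 0 x ∂μ := fun i => (hidf i).integral_eq
  have hmg : ∀ i, ∫ x, g i x ∂μ = ∫ x, g 0 x ∂μ := fun i => (hidg i).integral_eq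
  set a : ℕ → ℝ := fun i => (if i < N then (1/N : ℝ) else 0) - (if i < m then (1/m : ℝ) else 0)
    with hadef
  set b : ℕ → ℝ := fun i => (if i < N then (1/N : ℝ) else 0) - (if i < n then (1/n : ℝ) else 0)
    with hbdef
  have hXfun : (fun ω => (1 / N : ℝ) * ∑ j ∈ Finset.range N, (Z j ω).1
        - (1 / m : ℝ) * ∑ j ∈ Finset.range m, (Z j ω).1)
      = fun ω => ∑ i ∈ range n, a i * f i ω := by
    funext ω
    rw [← sum_ite_lt_mul hNn (1/N : ℝ) (fun i => f i ω),
        ← sum_ite_lt_mul hmn (1/m : ℝ) (fun i => f i ω), ← Finset.sum_sub_distrib]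
    exact Finset.sum_congr rfl fun i _ => (sub_mul _ _ _).symm
  have hYfun : (fun ω => (1 / N : ℝ) * ∑ j ∈ Finset.range N, (Z j ω).2
        - (1 / n : ℝ) * ∑ j ∈ Finset.range n, (Z j ω).2)
      = fun ω => ∑ i ∈ range n, b i * g i ω := by
    funext ω
    rw [← sum_ite_lt_mul hNn (1/N : ℝ) (fun i => g i ω),
        ← sum_ite_lt_mul le_rfl (1/n : ℝ) (fun i => g i ω), ← Finset.sum_sub_distrib]
    exact Finset.sum_congr rfl fun i _ => (sub_mul _ _ _).symm
  have hcovij : ∀ i j, i ≠ j → cov μ (f i) (g j) = 0 := by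
    intro i j hij
    have hind : IndepFun (f i - fun _ => ∫ x, f i x ∂μ) (g j - fun _ => ∫ x, g j x ∂μ) μ :=
      (hindep.indepFun hij).comp
        (measurable_fst.sub measurable_const) (measurable_snd.sub measurable_const)
    have hiz : ∫ ω, (f i ω - ∫ x, f i x ∂μ) ∂μ = 0 := by
      rw [integral_sub ((hfL2 i).integrable one_le_two) (integrable_const _),
        integral_const]
      simp
    have hmul := IndepFun.integral_fun_mul_eq_mul_integral hind (((hfL2 i).sub (memLp_const _)).aestronglyMeasurable)
      (((hgL2 j).sub (memLp_const _)).aestronglyMeasurable)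
    simp only [Pi.sub_apply] at hmul
    show (∫ ω, (f i ω - ∫ x, f i x ∂μ) * (g j ω - ∫ x, g j x ∂μ) ∂μ) = 0
    have hiz' : integral μ (f i - fun _ => ∫ x, f i x ∂μ) = 0 := hiz
    rw [hmul, hiz, zero_mul]
  have hcovii : ∀ i, cov μ (f i) (g i) = cov μ (fun ω => (Z 0 ω).1) (fun ω => (Z 0 ω).2) := by
    intro i
    show (∫ ω, (f i ω - ∫ x, f i x ∂μ) * (g i ω - ∫ x, g i x ∂μ) ∂μ)
      = ∫ ω, (f 0 ω - ∫ x, f 0 x ∂μ) * (g 0 ω - ∫ x, g 0 x ∂μ) ∂μ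
    rw [hmf i, hmg i]
    exact ((hident i).comp ((measurable_fst.sub measurable_const).mul
      (measurable_snd.sub measurable_const))).integral_eq
  rw [hXfun, hYfun, cov_sum_sum μ (range n) a b f g hfL2 hgL2]
  have hred : ∑ i ∈ range n, ∑ j ∈ range n, a i * b j * cov μ (f i) (g j)
      = (∑ i ∈ range n, a i * b i) * cov μ (fun ω => (Z 0 ω).1) (fun ω => (Z 0 ω).2) := by
    rw [Finset.sum_mul]
    refine Finset.sum_congr rfl fun i hi => ?_
    rw [Finset.sum_eq_single i]
    · rw [hcovii i]
    · intro j _ hji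
      rw [hcovij i j (Ne.symm hji), mul_zero]
    · intro h; exact absurd hi h
  rw [hred]
  have hsum : ∑ i ∈ range n, a i * b i = ((m:ℝ) - N) / ((m:ℝ) * N) := by
    rw [Finset.range_eq_Ico, ← Finset.sum_Ico_consecutive _ (Nat.zero_le m) hmn,
        ← Finset.sum_Ico_consecutive _ (Nat.zero_le N) hNm]
    have e1 : ∑ i ∈ Finset.Ico 0 N, a i * b i
        = (N : ℝ) * (((1/N : ℝ) - 1/m) * ((1/N : ℝ) - 1/n)) := by
      have h : ∀ i ∈ Finset.Ico 0 N, a i * b i = ((1/N : ℝ) - 1/m) * ((1/N : ℝ) - 1/n) := by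
        intro i hi
        have hiN := (Finset.mem_Ico.1 hi).2
        simp only [hadef, hbdef, if_pos hiN, if_pos (lt_of_lt_of_le hiN hNm),
          if_pos (lt_of_lt_of_le hiN hNn)]
      rw [Finset.sum_congr rfl h, Finset.sum_const, Nat.card_Ico, Nat.sub_zero, nsmul_eq_mul]
    have e2 : ∑ i ∈ Finset.Ico N m, a i * b i = ((m : ℝ) - N) * ((1/m : ℝ) * (1/n : ℝ)) := by
      have h : ∀ i ∈ Finset.Ico N m, a i * b i = (0 - (1/m : ℝ)) * (0 - (1/n : ℝ)) := by
        intro i hi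
        obtain ⟨hiN, him⟩ := Finset.mem_Ico.1 hi
        simp only [hadef, hbdef, if_neg (not_lt.2 hiN), if_pos him,
          if_pos (lt_of_lt_of_le him hmn)]
      rw [Finset.sum_congr rfl h, Finset.sum_const, Nat.card_Ico, nsmul_eq_mul,
        Nat.cast_sub hNm]
      ring
    have e3 : ∑ i ∈ Finset.Ico m n, a i * b i = 0 := by
      refine Finset.sum_eq_zero fun i hi => ?_
      obtain ⟨him, _⟩ := Finset.mem_Ico.1 hi
      have hiN : ¬ i < N := not_lt.2 (le_trans hNm him)
      simp only [hadef, hbdef, if_neg hiN, if_neg (not_lt.2 him)]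
      ring
    rw [e1, e2, e3]
    field_simp
    ring
  rw [hsum, show ((m:ℝ) ⊓ (n:ℝ)) = (m:ℝ) from min_eq_left (by exact_mod_cast hmn)]
end

section
/- Let (X_j, Y_j)_{j\ge 1} be i.i.d. square-integrable random pairs, and let (X'_j)_{j\ge 1}, (Y'_j)_{j\ge 1} be independent copies, mutually independent of each other and of the shared block. For N \le m, N \le n define \Delta^X = (1/N)\sum_{j=1}^N X_j - (1/m)(\sum_{j=1}^N X_j + \sum_{j=N+1}^m X'_j) and analogously \Delta^Y with the independent sequence Y'. Then Cov[\Delta^X, \Delta^Y] = ((m-N)/m)((n-N)/n) Cov[X_1, Y_1]/N. -/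
open MeasureTheory ProbabilityTheory Finset

section Aux

variable {Ω : Type*} [MeasurableSpace Ω] {μ : Measure Ω} [IsProbabilityMeasure μ]

lemma integrable_mul_L2 {f g : Ω → ℝ} (hf : MemLp f 2 μ) (hg : MemLp g 2 μ) :
    Integrable (fun ω => f ω * g ω) μ := by
  have h : MemLp (f • g) 1 μ := hg.smul hf
  exact h.integrable le_rfl

lemma cov_eq' {f g : Ω → ℝ} (hf : MemLp f 2 μ) (hg : MemLp g 2 μ) :
    cov μ f g = (∫ ω, f ω * g ω ∂μ) - (∫ ω, f ω ∂μ) * ∫ ω, g ω ∂μ := by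
  have hfi : Integrable f μ := hf.integrable one_le_two
  have hgi : Integrable g μ := hg.integrable one_le_two
  have hfg : Integrable (fun ω => f ω * g ω) μ := integrable_mul_L2 hf hg
  unfold cov
  have e : ∀ ω, (f ω - ∫ x, f x ∂μ) * (g ω - ∫ x, g x ∂μ)
      = f ω * g ω - (∫ x, f x ∂μ) * g ω - (∫ x, g x ∂μ) * f ω
        + (∫ x, f x ∂μ) * (∫ x, g x ∂μ) := fun ω => by ring
  simp_rw [e]
  have i2 : Integrable (fun ω => f ω * g ω - (∫ x, f x ∂μ) * g ω) μ :=
    hfg.sub (hgi.const_mul _)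
  have i1 : Integrable
      (fun ω => f ω * g ω - (∫ x, f x ∂μ) * g ω - (∫ x, g x ∂μ) * f ω) μ :=
    i2.sub (hfi.const_mul _)
  rw [integral_add i1 (integrable_const _), integral_sub i2 (hfi.const_mul _),
    integral_sub hfg (hgi.const_mul _), integral_const_mul, integral_const_mul,
    integral_const]
  simp [measure_univ]
  ring

lemma cov_comm (f g : Ω → ℝ) : cov μ f g = cov μ g f := by
  unfold cov
  congr 1
  ext ω
  ring

lemma cov_cmul_left (c : ℝ) (f g : Ω → ℝ) :
    cov μ (fun ω => c * f ω) g = c * cov μ f g := by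
  have h : (∫ x, c * f x ∂μ) = c * ∫ x, f x ∂μ := integral_const_mul c f
  unfold cov
  rw [h]
  have e : ∀ ω, (c * f ω - c * ∫ x, f x ∂μ) * (g ω - ∫ x, g x ∂μ)
      = c * ((f ω - ∫ x, f x ∂μ) * (g ω - ∫ x, g x ∂μ)) := fun ω => by ring
  simp_rw [e]
  rw [integral_const_mul]

lemma cov_cmul_right (c : ℝ) (f g : Ω → ℝ) :
    cov μ f (fun ω => c * g ω) = c * cov μ f g := by
  rw [cov_comm, cov_cmul_left, cov_comm]

lemma cov_add_right {f k₁ k₂ : Ω → ℝ} (hf : MemLp f 2 μ) (h1 : MemLp k₁ 2 μ)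
    (h2 : MemLp k₂ 2 μ) :
    cov μ f (fun ω => k₁ ω + k₂ ω) = cov μ f k₁ + cov μ f k₂ := by
  have hadd : MemLp (fun ω => k₁ ω + k₂ ω) 2 μ := h1.add h2
  rw [cov_eq' hf hadd, cov_eq' hf h1, cov_eq' hf h2]
  have e : ∀ ω, f ω * (k₁ ω + k₂ ω) = f ω * k₁ ω + f ω * k₂ ω := fun ω => by ring
  simp_rw [e]
  rw [integral_add (integrable_mul_L2 hf h1) (integrable_mul_L2 hf h2),
    integral_add (h1.integrable one_le_two) (h2.integrable one_le_two)]
  ring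

lemma cov_add_left {h₁ h₂ g : Ω → ℝ} (h1 : MemLp h₁ 2 μ) (h2 : MemLp h₂ 2 μ)
    (hg : MemLp g 2 μ) :
    cov μ (fun ω => h₁ ω + h₂ ω) g = cov μ h₁ g + cov μ h₂ g := by
  rw [cov_comm, cov_add_right hg h1 h2, cov_comm, cov_comm g]

lemma cov_sub_sub {h₁ h₂ k₁ k₂ : Ω → ℝ} (H1 : MemLp h₁ 2 μ) (H2 : MemLp h₂ 2 μ)
    (K1 : MemLp k₁ 2 μ) (K2 : MemLp k₂ 2 μ) :
    cov μ (fun ω => h₁ ω - h₂ ω) (fun ω => k₁ ω - k₂ ω)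
      = cov μ h₁ k₁ - cov μ h₁ k₂ - cov μ h₂ k₁ + cov μ h₂ k₂ := by
  have hH : MemLp (fun ω => h₁ ω - h₂ ω) 2 μ := H1.sub H2
  have hK : MemLp (fun ω => k₁ ω - k₂ ω) 2 μ := K1.sub K2
  rw [cov_eq' hH hK, cov_eq' H1 K1, cov_eq' H1 K2, cov_eq' H2 K1, cov_eq' H2 K2]
  have e : ∀ ω, (h₁ ω - h₂ ω) * (k₁ ω - k₂ ω)
      = h₁ ω * k₁ ω - h₁ ω * k₂ ω - h₂ ω * k₁ ω + h₂ ω * k₂ ω := fun ω => by ring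
  simp_rw [e]
  have i2 : Integrable (fun ω => h₁ ω * k₁ ω - h₁ ω * k₂ ω) μ :=
    (integrable_mul_L2 H1 K1).sub (integrable_mul_L2 H1 K2)
  have i1 : Integrable (fun ω => h₁ ω * k₁ ω - h₁ ω * k₂ ω - h₂ ω * k₁ ω) μ :=
    i2.sub (integrable_mul_L2 H2 K1)
  rw [integral_add i1 (integrable_mul_L2 H2 K2),
    integral_sub i2 (integrable_mul_L2 H2 K1),
    integral_sub (integrable_mul_L2 H1 K1) (integrable_mul_L2 H1 K2),
    integral_sub (H1.integrable one_le_two) (H2.integrable one_le_two),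
    integral_sub (K1.integrable one_le_two) (K2.integrable one_le_two)]
  ring

lemma cov_sum_left {s : Finset ℕ} {F : ℕ → Ω → ℝ} {g : Ω → ℝ}
    (hF : ∀ j ∈ s, MemLp (F j) 2 μ) (hg : MemLp g 2 μ) :
    cov μ (fun ω => ∑ j ∈ s, F j ω) g = ∑ j ∈ s, cov μ (F j) g := by
  have hS : MemLp (fun ω => ∑ j ∈ s, F j ω) 2 μ := memLp_finset_sum s hF
  rw [cov_eq' hS hg]
  have e : ∀ ω, (∑ j ∈ s, F j ω) * g ω = ∑ j ∈ s, F j ω * g ω :=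
    fun ω => Finset.sum_mul ..
  simp_rw [e]
  rw [integral_finset_sum s (fun j hj => integrable_mul_L2 (hF j hj) hg),
    integral_finset_sum s (fun j hj => (hF j hj).integrable one_le_two),
    Finset.sum_mul, ← Finset.sum_sub_distrib]
  exact Finset.sum_congr rfl fun j hj => (cov_eq' (hF j hj) hg).symm

lemma cov_sum_sum_s9 {s t : Finset ℕ} {F G : ℕ → Ω → ℝ}
    (hF : ∀ j ∈ s, MemLp (F j) 2 μ) (hG : ∀ k ∈ t, MemLp (G k) 2 μ) :
    cov μ (fun ω => ∑ j ∈ s, F j ω) (fun ω => ∑ k ∈ t, G k ω)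
      = ∑ j ∈ s, ∑ k ∈ t, cov μ (F j) (G k) := by
  have hT : MemLp (fun ω => ∑ k ∈ t, G k ω) 2 μ := memLp_finset_sum t hG
  rw [cov_sum_left hF hT]
  refine Finset.sum_congr rfl fun j hj => ?_
  rw [cov_comm, cov_sum_left hG (hF j hj)]
  exact Finset.sum_congr rfl fun k _ => cov_comm _ _

lemma cov_eq_zero_of_indep {f g : Ω → ℝ} (h : IndepFun f g μ)
    (hf : MemLp f 2 μ) (hg : MemLp g 2 μ) : cov μ f g = 0 := by
  rw [cov_eq' hf hg,
    show (∫ ω, f ω * g ω ∂μ) = (∫ ω, f ω ∂μ) * ∫ ω, g ω ∂μ from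
      h.integral_mul_eq_mul_integral hf.aestronglyMeasurable hg.aestronglyMeasurable]
  ring

end Aux

/-- ACV-IS off-diagonal covariance: the means of `X` and `Y` share exactly the first `N`
samples and the enrichment samples beyond `N` come from mutually independent copies
`X'`, `Y'`.  Then `Cov[ΔX, ΔY] = ((m-N)/m)((n-N)/n) Cov[X₁,Y₁]/N`.  The full mutual
independence of the shared pairs `(Xⱼ, Yⱼ)`, the copies `X'ⱼ` and the copies `Y'ⱼ` is
expressed as joint independence of the family indexed by `ℕ ⊕ ℕ ⊕ ℕ` (the scalar
sequences are embedded into `ℝ × ℝ` with second component `0`, which generates the same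
σ-algebras). -/
theorem stmt9 {Ω : Type*} [MeasurableSpace Ω] (μ : Measure Ω) [IsProbabilityMeasure μ]
    (X Y X' Y' : ℕ → Ω → ℝ)
    (hmX : ∀ j, Measurable (X j)) (hmY : ∀ j, Measurable (Y j))
    (hmX' : ∀ j, Measurable (X' j)) (hmY' : ∀ j, Measurable (Y' j))
    (hindep : iIndepFun
      (Sum.elim (fun j ω => (X j ω, Y j ω))
        (Sum.elim (fun j ω => (X' j ω, (0 : ℝ))) (fun j ω => (Y' j ω, (0 : ℝ))))) μ)
    (hident : ∀ j, IdentDistrib (fun ω => (X j ω, Y j ω)) (fun ω => (X 0 ω, Y 0 ω)) μ μ)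
    (hidentX' : ∀ j, IdentDistrib (X' j) (X j) μ μ)
    (hidentY' : ∀ j, IdentDistrib (Y' j) (Y j) μ μ)
    (hL2X : MemLp (X 0) 2 μ) (hL2Y : MemLp (Y 0) 2 μ)
    (N m n : ℕ) (hN : 1 ≤ N) (hNm : N ≤ m) (hNn : N ≤ n) :
    cov μ
      (fun ω => (1 / N : ℝ) * ∑ j ∈ Finset.range N, X j ω
        - (1 / m : ℝ) * (∑ j ∈ Finset.range N, X j ω + ∑ j ∈ Finset.Ico N m, X' j ω))
      (fun ω => (1 / N : ℝ) * ∑ j ∈ Finset.range N, Y j ω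
        - (1 / n : ℝ) * (∑ j ∈ Finset.range N, Y j ω + ∑ j ∈ Finset.Ico N n, Y' j ω))
      = (((m : ℝ) - N) / m) * (((n : ℝ) - N) / n) * cov μ (X 0) (Y 0) / N := by
  -- L² membership of all the random variables
  have hL2Xj : ∀ j, MemLp (X j) 2 μ :=
    fun j => ((hident j).comp measurable_fst).symm.memLp_snd hL2X
  have hL2Yj : ∀ j, MemLp (Y j) 2 μ :=
    fun j => ((hident j).comp measurable_snd).symm.memLp_snd hL2Y
  have hL2X'j : ∀ j, MemLp (X' j) 2 μ :=
    fun j => ((hidentX' j).symm).memLp_snd (hL2Xj j)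
  have hL2Y'j : ∀ j, MemLp (Y' j) 2 μ :=
    fun j => ((hidentY' j).symm).memLp_snd (hL2Yj j)
  -- pairwise independence facts
  have hXY : ∀ j k, j ≠ k → IndepFun (X j) (Y k) μ := fun j k hjk =>
    (hindep.indepFun (show (Sum.inl j : ℕ ⊕ ℕ ⊕ ℕ) ≠ Sum.inl k by simpa using hjk)).comp
      measurable_fst measurable_snd
  have hXY' : ∀ j k, IndepFun (X j) (Y' k) μ := fun j k =>
    (hindep.indepFun
      (show (Sum.inl j : ℕ ⊕ ℕ ⊕ ℕ) ≠ Sum.inr (Sum.inr k) by simp)).comp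
      measurable_fst measurable_fst
  have hX'Y : ∀ j k, IndepFun (X' j) (Y k) μ := fun j k =>
    (hindep.indepFun
      (show (Sum.inr (Sum.inl j) : ℕ ⊕ ℕ ⊕ ℕ) ≠ Sum.inl k by simp)).comp
      measurable_fst measurable_snd
  have hX'Y' : ∀ j k, IndepFun (X' j) (Y' k) μ := fun j k =>
    (hindep.indepFun
      (show (Sum.inr (Sum.inl j) : ℕ ⊕ ℕ ⊕ ℕ) ≠ Sum.inr (Sum.inr k) by simp)).comp
      measurable_fst measurable_fst
  -- identically distributed diagonal covariances
  have hcovjj : ∀ j, cov μ (X j) (Y j) = cov μ (X 0) (Y 0) := by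
    intro j
    rw [cov_eq' (hL2Xj j) (hL2Yj j), cov_eq' hL2X hL2Y]
    have h1 : (∫ ω, X j ω * Y j ω ∂μ) = ∫ ω, X 0 ω * Y 0 ω ∂μ :=
      ((hident j).comp (measurable_fst.mul measurable_snd)).integral_eq
    have h2 : (∫ ω, X j ω ∂μ) = ∫ ω, X 0 ω ∂μ :=
      ((hident j).comp measurable_fst).integral_eq
    have h3 : (∫ ω, Y j ω ∂μ) = ∫ ω, Y 0 ω ∂μ :=
      ((hident j).comp measurable_snd).integral_eq
    rw [h1, h2, h3]
  -- L² membership of the block sums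
  have hA : MemLp (fun ω => ∑ j ∈ Finset.range N, X j ω) 2 μ :=
    memLp_finset_sum _ fun j _ => hL2Xj j
  have hB : MemLp (fun ω => ∑ j ∈ Finset.Ico N m, X' j ω) 2 μ :=
    memLp_finset_sum _ fun j _ => hL2X'j j
  have hC : MemLp (fun ω => ∑ j ∈ Finset.range N, Y j ω) 2 μ :=
    memLp_finset_sum _ fun j _ => hL2Yj j
  have hD : MemLp (fun ω => ∑ j ∈ Finset.Ico N n, Y' j ω) 2 μ :=
    memLp_finset_sum _ fun j _ => hL2Y'j j
  have H1 : MemLp (fun ω => (1 / N : ℝ) * ∑ j ∈ Finset.range N, X j ω) 2 μ :=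
    hA.const_mul _
  have H2 : MemLp (fun ω =>
      (1 / m : ℝ) * (∑ j ∈ Finset.range N, X j ω + ∑ j ∈ Finset.Ico N m, X' j ω)) 2 μ :=
    (hA.add hB).const_mul _
  have K1 : MemLp (fun ω => (1 / N : ℝ) * ∑ j ∈ Finset.range N, Y j ω) 2 μ :=
    hC.const_mul _
  have K2 : MemLp (fun ω =>
      (1 / n : ℝ) * (∑ j ∈ Finset.range N, Y j ω + ∑ j ∈ Finset.Ico N n, Y' j ω)) 2 μ :=
    (hC.add hD).const_mul _
  have hCD : MemLp (fun ω =>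
      (∑ j ∈ Finset.range N, Y j ω) + ∑ j ∈ Finset.Ico N n, Y' j ω) 2 μ := hC.add hD
  rw [cov_sub_sub H1 H2 K1 K2]
  simp only [cov_cmul_left, cov_cmul_right]
  rw [cov_add_right hA hC hD, cov_add_left hA hB hC,
    cov_add_left hA hB hCD, cov_add_right hA hC hD, cov_add_right hB hC hD]
  -- compute the four basic covariances
  have hAC : cov μ (fun ω => ∑ j ∈ Finset.range N, X j ω)
      (fun ω => ∑ k ∈ Finset.range N, Y k ω) = N * cov μ (X 0) (Y 0) := by
    rw [cov_sum_sum_s9 (fun j _ => hL2Xj j) (fun k _ => hL2Yj k)]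
    have e : ∀ j ∈ Finset.range N,
        (∑ k ∈ Finset.range N, cov μ (X j) (Y k)) = cov μ (X 0) (Y 0) := by
      intro j hj
      rw [Finset.sum_eq_single j
        (fun k _ hkj => cov_eq_zero_of_indep (hXY j k fun h => hkj h.symm)
          (hL2Xj j) (hL2Yj k))
        (fun hj' => absurd hj hj')]
      exact hcovjj j
    rw [Finset.sum_congr rfl e, Finset.sum_const, Finset.card_range, nsmul_eq_mul]
  have hAD : cov μ (fun ω => ∑ j ∈ Finset.range N, X j ω)
      (fun ω => ∑ k ∈ Finset.Ico N n, Y' k ω) = 0 := by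
    rw [cov_sum_sum_s9 (fun j _ => hL2Xj j) (fun k _ => hL2Y'j k)]
    exact Finset.sum_eq_zero fun j _ => Finset.sum_eq_zero fun k _ =>
      cov_eq_zero_of_indep (hXY' j k) (hL2Xj j) (hL2Y'j k)
  have hBC : cov μ (fun ω => ∑ j ∈ Finset.Ico N m, X' j ω)
      (fun ω => ∑ k ∈ Finset.range N, Y k ω) = 0 := by
    rw [cov_sum_sum_s9 (fun j _ => hL2X'j j) (fun k _ => hL2Yj k)]
    exact Finset.sum_eq_zero fun j _ => Finset.sum_eq_zero fun k _ =>
      cov_eq_zero_of_indep (hX'Y j k) (hL2X'j j) (hL2Yj k)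
  have hBD : cov μ (fun ω => ∑ j ∈ Finset.Ico N m, X' j ω)
      (fun ω => ∑ k ∈ Finset.Ico N n, Y' k ω) = 0 := by
    rw [cov_sum_sum_s9 (fun j _ => hL2X'j j) (fun k _ => hL2Y'j k)]
    exact Finset.sum_eq_zero fun j _ => Finset.sum_eq_zero fun k _ =>
      cov_eq_zero_of_indep (hX'Y' j k) (hL2X'j j) (hL2Y'j k)
  rw [hAC, hAD, hBC, hBD]
  have hN0 : (N : ℝ) ≠ 0 := Nat.cast_ne_zero.mpr (by omega)
  have hm0 : (m : ℝ) ≠ 0 := Nat.cast_ne_zero.mpr (by omega)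
  have hn0 : (n : ℝ) ≠ 0 := Nat.cast_ne_zero.mpr (by omega)
  field_simp
  ring
end

section
/- With diagonal discrepancy covariance from the MFMC structure, the variance reduction ratio satisfies R^2_{MFMC} = \sum_{i=1}^M ((r_i - r_{i-1})/(r_i r_{i-1})) \rho_i^2, where \rho_i is the correlation between Q and Q_i and r_0 = 1. -/
open Matrix Finset

/-- MFMC variance-reduction ratio: with the diagonal discrepancy covariance
`Cov[Δ,Δ] = diag(dᵢ vᵢ / N)` and `Cov[Q̂,Δ]ᵢ = dᵢ cᵢ / N`, where
`dᵢ = (rᵢ - r_{i-1})/(rᵢ r_{i-1})`, the ratio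
`R² = Cov[Q̂,Δ]ᵀ Cov[Δ,Δ]⁻¹ Cov[Q̂,Δ] / (Var[Q]/N)` equals `∑ᵢ dᵢ ρᵢ²`
with `ρᵢ = cᵢ/√(Var[Q] vᵢ)`. -/
theorem stmt16 (M : ℕ) (N : ℝ) (hNpos : 0 < N)
    (r : ℕ → ℝ) (hr0 : r 0 = 1) (hrpos : ∀ i, 0 < r i)
    (hrmono : ∀ i : ℕ, i < M → r i < r (i + 1))
    (vQ : ℝ) (hvQ : 0 < vQ)
    (v c : Fin M → ℝ) (hv : ∀ i, 0 < v i)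
    (d : Fin M → ℝ) (hd : ∀ i : Fin M, d i = (r (i + 1) - r i) / (r (i + 1) * r i))
    (A : Matrix (Fin M) (Fin M) ℝ) (hA : A = Matrix.diagonal (fun i => d i * v i / N))
    (b : Fin M → ℝ) (hb : ∀ i, b i = d i * c i / N)
    (ρ : Fin M → ℝ) (hρ : ∀ i, ρ i = c i / Real.sqrt (vQ * v i)) :
    (b ⬝ᵥ A⁻¹.mulVec b) / (vQ / N) = ∑ i, d i * ρ i ^ 2 := by
  have hdpos : ∀ i : Fin M, 0 < d i := by
    intro i
    rw [hd]
    apply div_pos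
    · have := hrmono i i.isLt
      linarith
    · exact mul_pos (hrpos _) (hrpos _)
  have hAinv : A⁻¹ = Matrix.diagonal (fun i => (d i * v i / N)⁻¹) := by
    apply Matrix.inv_eq_right_inv
    rw [hA, Matrix.diagonal_mul_diagonal]
    convert Matrix.diagonal_one
    rename_i i
    have hdi := (hdpos i).ne'
    have hvi := (hv i).ne'
    have hN := hNpos.ne'
    field_simp
  rw [hAinv]
  have hlhs : b ⬝ᵥ (Matrix.diagonal (fun i => (d i * v i / N)⁻¹)).mulVec b
      = ∑ i, d i * c i ^ 2 / (N * v i) := by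
    simp only [dotProduct, Matrix.mulVec_diagonal]
    apply Finset.sum_congr rfl
    intro i _
    rw [hb]
    have hdi := (hdpos i).ne'
    have hvi := (hv i).ne'
    have hN := hNpos.ne'
    field_simp
  rw [hlhs, Finset.sum_div]
  apply Finset.sum_congr rfl
  intro i _
  rw [hρ]
  have hsq : (c i / Real.sqrt (vQ * v i)) ^ 2 = c i ^ 2 / (vQ * v i) := by
    rw [div_pow, Real.sq_sqrt (le_of_lt (mul_pos hvQ (hv i)))]
  rw [hsq]
  have hdi := (hdpos i).ne'
  have hvi := (hv i).ne'
  have hN := hNpos.ne'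
  have hvQ' := hvQ.ne'
  field_simp
end
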